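/- Let a, b, c be real numbers with a² + b² < c². Then for all (x,y) ∈ ℝ², the first fundamental form of F_{a,b,c} is given by ⟨∂_x F_{a,b,c}(x,y), ∂_x F_{a,b,c}(x,y)⟩ = (1/2)(c² + (b²−a²)cos 2y), ⟨∂_x F_{a,b,c}(x,y), ∂_y F_{a,b,c}(x,y)⟩ = 0, and ⟨∂_y F_{a,b,c}(x,y), ∂_y F_{a,b,c}(x,y)⟩ = (c² + (b²−a²)cos 2y)/(2c² − a² − b² + (b²−a²)cos 2y), where the inner products are taken in ℝ⁶ ≅ ℂ³. -/

import Mathlib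

/-!
Each complex coordinate of `F_{a,b,c}` has the form `r(y) e^{imx}`, so in each factor `ℂ` the
partials `∂ₓ = i m r e^{imx}` and `∂_y = r' e^{imx}` are orthogonal, with `|∂ₓ|² = m² r²` and
`|∂_y|² = r'²`. Summing over the three factors, the coefficients of the first fundamental form are
`Σ mₖ² rₖ²` and `Σ rₖ'²`. For `F_{a,b,c}` the profiles are multiples of `sin`, `cos` and
`√(1 - κ sin² y)` with `κ = (b² - a²)/(c² - a²) < 1`, and the two sums simplify to the stated
functions of `cos 2y`.
-/

open Real

open scoped RealInnerProductSpace

noncomputable def genLawson (a b c : ℝ) : ℝ × ℝ → EuclideanSpace ℝ (Fin 6) := fun p =>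
  WithLp.toLp 2 ![Real.sqrt ((b^2 + c^2 - a^2) / (2 * (c^2 - a^2))) * Real.cos (a * p.1) * Real.sin p.2,
    Real.sqrt ((b^2 + c^2 - a^2) / (2 * (c^2 - a^2))) * Real.sin (a * p.1) * Real.sin p.2,
    Real.sqrt ((a^2 + c^2 - b^2) / (2 * (c^2 - b^2))) * Real.cos (b * p.1) * Real.cos p.2,
    Real.sqrt ((a^2 + c^2 - b^2) / (2 * (c^2 - b^2))) * Real.sin (b * p.1) * Real.cos p.2,
    Real.sqrt ((c^2 - a^2 - b^2) / (2 * (c^2 - b^2))) * Real.cos (c * p.1) *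
      Real.sqrt (1 - (b^2 - a^2) / (c^2 - a^2) * Real.sin p.2 ^ 2),
    Real.sqrt ((c^2 - a^2 - b^2) / (2 * (c^2 - b^2))) * Real.sin (c * p.1) *
      Real.sqrt (1 - (b^2 - a^2) / (c^2 - a^2) * Real.sin p.2 ^ 2)]

open ContinuousLinearMap

section PartialDerivatives

variable {x y : ℝ}

theorem hasFDerivAt_mul_fst_snd {f g : ℝ → ℝ} {f' g' : ℝ} (hf : HasDerivAt f f' x)
    (hg : HasDerivAt g g' y) :
    HasFDerivAt (fun p : ℝ × ℝ => f p.1 * g p.2)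
      ((f' * g y) • fst ℝ ℝ ℝ + (f x * g') • snd ℝ ℝ ℝ) (x, y) := by
  have hf₁ := hf.comp_hasFDerivAt (x, y) (hasFDerivAt_fst (𝕜 := ℝ))
  have hg₂ := hg.comp_hasFDerivAt (x, y) (hasFDerivAt_snd (𝕜 := ℝ))
  refine (hf₁.mul hg₂).congr_fderiv (ContinuousLinearMap.ext fun v => ?_)
  simp only [add_apply, smul_apply, coe_fst', coe_snd', smul_eq_mul, Function.comp_apply]
  ring

theorem hasFDerivAt_cos_fst_mul_snd {s : ℝ → ℝ} {s' : ℝ} (k m : ℝ) (hs : HasDerivAt s s' y) :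
    HasFDerivAt (fun p : ℝ × ℝ => k * cos (m * p.1) * s p.2)
      ((-(k * m * sin (m * x) * s y)) • fst ℝ ℝ ℝ + (k * cos (m * x) * s') • snd ℝ ℝ ℝ)
      (x, y) := by
  convert hasFDerivAt_mul_fst_snd (((hasDerivAt_const_mul m).cos).const_mul k) hs using 3
  ring

theorem hasFDerivAt_sin_fst_mul_snd {s : ℝ → ℝ} {s' : ℝ} (k m : ℝ) (hs : HasDerivAt s s' y) :
    HasFDerivAt (fun p : ℝ × ℝ => k * sin (m * p.1) * s p.2)
      ((k * m * cos (m * x) * s y) • fst ℝ ℝ ℝ + (k * sin (m * x) * s') • snd ℝ ℝ ℝ)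
      (x, y) := by
  convert hasFDerivAt_mul_fst_snd (((hasDerivAt_const_mul m).sin).const_mul k) hs using 3
  ring

theorem hasFDerivAt_euclidean_of_partials {ι : Type*} [Fintype ι]
    {F : ℝ × ℝ → EuclideanSpace ℝ ι} {u v : EuclideanSpace ℝ ι} {p : ℝ × ℝ}
    (hF : ∀ i, HasFDerivAt (fun q => F q i) (u i • fst ℝ ℝ ℝ + v i • snd ℝ ℝ ℝ) p) :
    HasFDerivAt F ((fst ℝ ℝ ℝ).smulRight u + (snd ℝ ℝ ℝ).smulRight v) p := by
  rw [← hasFDerivWithinAt_univ, hasFDerivWithinAt_euclidean]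
  refine fun i => ((hF i).congr_fderiv (ContinuousLinearMap.ext fun w => ?_)).hasFDerivWithinAt
  simp [mul_comm]

end PartialDerivatives

/-- `(x, y) ↦ (k₁ s₁(y) e^{i m₁ x}, k₂ s₂(y) e^{i m₂ x}, k₃ s₃(y) e^{i m₃ x}) ∈ ℂ³ ≅ ℝ⁶`. -/
noncomputable def rotationalMap (m₁ m₂ m₃ k₁ k₂ k₃ : ℝ) (s₁ s₂ s₃ : ℝ → ℝ) (p : ℝ × ℝ) :
    EuclideanSpace ℝ (Fin 6) :=
  WithLp.toLp 2 ![k₁ * cos (m₁ * p.1) * s₁ p.2, k₁ * sin (m₁ * p.1) * s₁ p.2,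
    k₂ * cos (m₂ * p.1) * s₂ p.2, k₂ * sin (m₂ * p.1) * s₂ p.2,
    k₃ * cos (m₃ * p.1) * s₃ p.2, k₃ * sin (m₃ * p.1) * s₃ p.2]

section RotationalMap

variable {m₁ m₂ m₃ k₁ k₂ k₃ : ℝ} {s₁ s₂ s₃ : ℝ → ℝ} {s₁' s₂' s₃' x y : ℝ}

theorem hasFDerivAt_rotationalMap (h₁ : HasDerivAt s₁ s₁' y) (h₂ : HasDerivAt s₂ s₂' y)
    (h₃ : HasDerivAt s₃ s₃' y) :
    HasFDerivAt (rotationalMap m₁ m₂ m₃ k₁ k₂ k₃ s₁ s₂ s₃)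
      ((fst ℝ ℝ ℝ).smulRight (WithLp.toLp 2 ![-(k₁ * m₁ * sin (m₁ * x) * s₁ y),
          k₁ * m₁ * cos (m₁ * x) * s₁ y, -(k₂ * m₂ * sin (m₂ * x) * s₂ y),
          k₂ * m₂ * cos (m₂ * x) * s₂ y, -(k₃ * m₃ * sin (m₃ * x) * s₃ y),
          k₃ * m₃ * cos (m₃ * x) * s₃ y]) +
        (snd ℝ ℝ ℝ).smulRight (WithLp.toLp 2 ![k₁ * cos (m₁ * x) * s₁', k₁ * sin (m₁ * x) * s₁',
          k₂ * cos (m₂ * x) * s₂', k₂ * sin (m₂ * x) * s₂', k₃ * cos (m₃ * x) * s₃',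
          k₃ * sin (m₃ * x) * s₃'])) (x, y) := by
  refine hasFDerivAt_euclidean_of_partials fun i => ?_
  fin_cases i
  · exact hasFDerivAt_cos_fst_mul_snd k₁ m₁ h₁
  · exact hasFDerivAt_sin_fst_mul_snd k₁ m₁ h₁
  · exact hasFDerivAt_cos_fst_mul_snd k₂ m₂ h₂
  · exact hasFDerivAt_sin_fst_mul_snd k₂ m₂ h₂
  · exact hasFDerivAt_cos_fst_mul_snd k₃ m₃ h₃
  · exact hasFDerivAt_sin_fst_mul_snd k₃ m₃ h₃

theorem rotationalMap_first_fundamental_form (h₁ : HasDerivAt s₁ s₁' y)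
    (h₂ : HasDerivAt s₂ s₂' y) (h₃ : HasDerivAt s₃ s₃' y) :
    let F' := fderiv ℝ (rotationalMap m₁ m₂ m₃ k₁ k₂ k₃ s₁ s₂ s₃) (x, y)
    ⟪F' (1, 0), F' (1, 0)⟫ = (k₁ * m₁ * s₁ y) ^ 2 + (k₂ * m₂ * s₂ y) ^ 2 + (k₃ * m₃ * s₃ y) ^ 2 ∧
    ⟪F' (1, 0), F' (0, 1)⟫ = 0 ∧
    ⟪F' (0, 1), F' (0, 1)⟫ = (k₁ * s₁') ^ 2 + (k₂ * s₂') ^ 2 + (k₃ * s₃') ^ 2 := by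
  simp only [(hasFDerivAt_rotationalMap h₁ h₂ h₃).fderiv, add_apply, smulRight_apply,
    coe_fst', coe_snd', one_smul, zero_smul, add_zero, zero_add, PiLp.inner_apply,
    Fin.sum_univ_six, Matrix.cons_val, RCLike.inner_apply, conj_trivial]
  have e₁ := sin_sq_add_cos_sq (m₁ * x)
  have e₂ := sin_sq_add_cos_sq (m₂ * x)
  have e₃ := sin_sq_add_cos_sq (m₃ * x)
  refine ⟨?_, by ring, ?_⟩
  · linear_combination (k₁ * m₁ * s₁ y) ^ 2 * e₁ + (k₂ * m₂ * s₂ y) ^ 2 * e₂ +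
      (k₃ * m₃ * s₃ y) ^ 2 * e₃
  · linear_combination (k₁ * s₁') ^ 2 * e₁ + (k₂ * s₂') ^ 2 * e₂ + (k₃ * s₃') ^ 2 * e₃

end RotationalMap

theorem one_sub_mul_sin_sq_pos {κ : ℝ} (hκ : κ < 1) (y : ℝ) : 0 < 1 - κ * sin y ^ 2 := by
  have hs := sin_sq_le_one y
  rcases le_or_gt κ 0 with hκ₀ | hκ₀ <;> nlinarith [sq_nonneg (sin y)]

theorem hasDerivAt_sqrt_one_sub_mul_sin_sq {κ : ℝ} (hκ : κ < 1) (y : ℝ) :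
    HasDerivAt (fun t => √(1 - κ * sin t ^ 2)) (-(κ * sin y * cos y) / √(1 - κ * sin y ^ 2)) y := by
  have hu : HasDerivAt (fun t => 1 - κ * sin t ^ 2) (-(κ * (2 * sin y * cos y))) y := by
    simpa using ((hasDerivAt_sin y).pow 2).const_mul κ |>.const_sub 1
  convert hu.sqrt (one_sub_mul_sin_sq_pos hκ y).ne' using 1
  field_simp

theorem genLawson_eq_rotationalMap (a b c : ℝ) :
    genLawson a b c = rotationalMap a b c
      √((b^2 + c^2 - a^2) / (2 * (c^2 - a^2))) √((a^2 + c^2 - b^2) / (2 * (c^2 - b^2)))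
      √((c^2 - a^2 - b^2) / (2 * (c^2 - b^2))) sin cos
      (fun t => √(1 - (b^2 - a^2) / (c^2 - a^2) * sin t ^ 2)) :=
  rfl

section Coefficients

variable {a b c : ℝ}

theorem lawson_ratio_lt_one (h : a^2 + b^2 < c^2) : (b^2 - a^2) / (c^2 - a^2) < 1 := by
  rw [div_lt_one (by linarith [sq_nonneg b])]
  linarith [sq_nonneg a]

theorem sq_sqrt_lawson_amplitudes (h : a^2 + b^2 < c^2) :
    √((b^2 + c^2 - a^2) / (2 * (c^2 - a^2))) ^ 2 = (b^2 + c^2 - a^2) / (2 * (c^2 - a^2)) ∧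
    √((a^2 + c^2 - b^2) / (2 * (c^2 - b^2))) ^ 2 = (a^2 + c^2 - b^2) / (2 * (c^2 - b^2)) ∧
    √((c^2 - a^2 - b^2) / (2 * (c^2 - b^2))) ^ 2 = (c^2 - a^2 - b^2) / (2 * (c^2 - b^2)) := by
  have hb := sq_nonneg b
  have ha := sq_nonneg a
  refine ⟨sq_sqrt (div_nonneg ?_ ?_), sq_sqrt (div_nonneg ?_ ?_), sq_sqrt (div_nonneg ?_ ?_)⟩ <;>
    linarith

theorem genLawson_E_eq (h : a^2 + b^2 < c^2) (y : ℝ) :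
    (√((b^2 + c^2 - a^2) / (2 * (c^2 - a^2))) * a * sin y) ^ 2 +
      (√((a^2 + c^2 - b^2) / (2 * (c^2 - b^2))) * b * cos y) ^ 2 +
      (√((c^2 - a^2 - b^2) / (2 * (c^2 - b^2))) * c * √(1 - (b^2 - a^2) / (c^2 - a^2) * sin y ^ 2)) ^ 2
      = 1 / 2 * (c^2 + (b^2 - a^2) * cos (2 * y)) := by
  obtain ⟨hA, hB, hC⟩ := sq_sqrt_lawson_amplitudes h
  have hW := sq_sqrt (one_sub_mul_sin_sq_pos (lawson_ratio_lt_one h) y).le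
  have hca : c^2 - a^2 ≠ 0 := by linarith [sq_nonneg b]
  have hcb : c^2 - b^2 ≠ 0 := by linarith [sq_nonneg a]
  simp only [mul_pow, hA, hB, hC, hW]
  rw [cos_two_mul, sin_sq]
  field_simp
  ring

theorem genLawson_G_eq (h : a^2 + b^2 < c^2) (y : ℝ) :
    (√((b^2 + c^2 - a^2) / (2 * (c^2 - a^2))) * cos y) ^ 2 +
      (√((a^2 + c^2 - b^2) / (2 * (c^2 - b^2))) * -sin y) ^ 2 +
      (√((c^2 - a^2 - b^2) / (2 * (c^2 - b^2))) *
        (-((b^2 - a^2) / (c^2 - a^2) * sin y * cos y) /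
          √(1 - (b^2 - a^2) / (c^2 - a^2) * sin y ^ 2))) ^ 2
      = (c^2 + (b^2 - a^2) * cos (2 * y)) / (2 * c^2 - a^2 - b^2 + (b^2 - a^2) * cos (2 * y)) := by
  obtain ⟨hA, hB, hC⟩ := sq_sqrt_lawson_amplitudes h
  have hca : 0 < c^2 - a^2 := by linarith [sq_nonneg b]
  have hcb : c^2 - b^2 ≠ 0 := by linarith [sq_nonneg a]
  have hu := one_sub_mul_sin_sq_pos (lawson_ratio_lt_one h) y
  have hN : 0 < c^2 - a^2 - sin y ^ 2 * (b^2 - a^2) := by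
    have := mul_pos hca hu
    field_simp at this
    linarith
  have hD : 2 * c^2 - a^2 - b^2 + (b^2 - a^2) * cos (2 * y)
      = 2 * (c^2 - a^2 - sin y ^ 2 * (b^2 - a^2)) := by
    rw [cos_two_mul, cos_sq']
    ring
  simp only [hD, mul_pow, div_pow, neg_sq, hA, hB, hC, sq_sqrt hu.le]
  rw [cos_two_mul, cos_sq']
  field_simp [hN.ne']
  ring

end Coefficients

/-- The first fundamental form of `F_{a,b,c}`:
`⟨∂ₓF,∂ₓF⟩ = (1/2)(c²+(b²−a²)cos 2y)`, `⟨∂ₓF,∂_yF⟩ = 0`, and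
`⟨∂_yF,∂_yF⟩ = (c²+(b²−a²)cos 2y)/(2c²−a²−b²+(b²−a²)cos 2y)`. -/
theorem genLawson_first_fundamental_form (a b c : ℝ) (h : a^2 + b^2 < c^2) (x y : ℝ) :
    ⟪fderiv ℝ (genLawson a b c) (x, y) (1, 0), fderiv ℝ (genLawson a b c) (x, y) (1, 0)⟫
        = 1 / 2 * (c^2 + (b^2 - a^2) * Real.cos (2 * y)) ∧
    ⟪fderiv ℝ (genLawson a b c) (x, y) (1, 0), fderiv ℝ (genLawson a b c) (x, y) (0, 1)⟫
        = 0 ∧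
    ⟪fderiv ℝ (genLawson a b c) (x, y) (0, 1), fderiv ℝ (genLawson a b c) (x, y) (0, 1)⟫
        = (c^2 + (b^2 - a^2) * Real.cos (2 * y))
            / (2 * c^2 - a^2 - b^2 + (b^2 - a^2) * Real.cos (2 * y)) := by
  obtain ⟨hE, hF, hG⟩ := rotationalMap_first_fundamental_form (x := x) (hasDerivAt_sin y)
    (hasDerivAt_cos y) (hasDerivAt_sqrt_one_sub_mul_sin_sq (lawson_ratio_lt_one h) y)
  rw [genLawson_eq_rotationalMap]
  exact ⟨hE.trans (genLawson_E_eq h y), hF, hG.trans (genLawson_G_eq h y)⟩
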